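/- arXiv:2006.09796 — 5 statements merged into one kernel-verified Lean document; each statement's English description precedes it below -/
import Mathlib

section
/- Let (d_k) be a summable sequence of nonnegative reals, N ∈ ℕ, and for λ > 0 let ϑ(λ) be the unique positive solution of ϑ = λ + (ϑ/N)∑_k d_k/(d_k + ϑ). Then ϑ is differentiable in λ and its derivative satisfies ∂_λϑ = 1/(1 − (1/N)∑_k d_k²/(d_k + ϑ)²), with 1 ≤ ∂_λϑ ≤ ϑ/λ. -/
/-!
Write the equation as `g ϑ = λ` with `g x = x (1 - S x / N)` and `S x = ∑ₖ dₖ/(dₖ+x)`. Every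
solution lies in the open set where `g > 0`, and there `g` is strictly increasing; so `ϑ` is the
inverse of a strictly monotone map between open sets, hence continuous, and the inverse function
theorem gives `ϑ' = 1 / g'(ϑ)` with `g' x = 1 - (1/N) ∑ₖ dₖ²/(dₖ+x)²` by termwise differentiation.
Since `dₖ²/(dₖ+x)² ≤ dₖ/(dₖ+x)`, we get `g'(ϑ) ≥ 1 - S(ϑ)/N = λ/ϑ > 0`, which yields both bounds.
-/

open Filter Set Topology

section InverseContinuity

variable {α β : Type*} [LinearOrder α] [TopologicalSpace α] [OrderTopology α]
  [LinearOrder β] [TopologicalSpace β] [OrderTopology β] [DenselyOrdered β]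

theorem StrictMonoOn.continuousAt_of_leftInvOn {f : α → β} {g : β → α} {s : Set α} {t : Set β}
    (hg : StrictMonoOn g t) (hs : IsOpen s) (ht : IsOpen t) (hf : MapsTo f s t)
    (hgs : MapsTo g t s) (hinv : LeftInvOn g f s) {y : α} (hy : y ∈ s) : ContinuousAt f y := by
  have hinv' : RightInvOn g f t := fun x hx => hg.injOn (hf (hgs hx)) hx (hinv (hgs hx))
  have hf_mono : StrictMonoOn f s := fun a ha b hb hab => by
    rwa [← hg.lt_iff_lt (hf ha) (hf hb), hinv ha, hinv hb]
  refine hf_mono.continuousAt_of_image_mem_nhds (hs.mem_nhds hy) ?_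
  rw [(InvOn.bijOn ⟨hinv, hinv'⟩ hf hgs).image_eq]
  exact ht.mem_nhds (hf hy)

end InverseContinuity

section Scalar

variable {a x : ℝ}

lemma sq_div_add_sq_le_div_add (ha : 0 ≤ a) (hx : 0 < x) :
    a ^ 2 / (a + x) ^ 2 ≤ a / (a + x) := by
  rw [← div_pow]
  exact pow_le_of_le_one (by positivity) (div_le_one_of_le₀ (by linarith) (by positivity))
    two_ne_zero

lemma hasDerivAt_mul_div_add (hax : a + x ≠ 0) :
    HasDerivAt (fun z => z * (a / (a + z))) (a ^ 2 / (a + x) ^ 2) x := by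
  refine ((hasDerivAt_id' x).mul ((hasDerivAt_const x a).div
    ((hasDerivAt_id' x).const_add a) hax)).congr_deriv ?_
  simp only [Pi.div_apply]
  field_simp
  ring

end Scalar

namespace SelfConsistent

variable {d : ℕ → ℝ}

lemma summable_div_add (hd : ∀ k, 0 ≤ d k) (hsum : Summable d) {x : ℝ} (hx : 0 < x) :
    Summable fun k => d k / (d k + x) :=
  .of_nonneg_of_le (fun k => div_nonneg (hd k) (by linarith [hd k]))
    (fun k => div_le_div_of_nonneg_left (hd k) hx (by linarith [hd k])) (hsum.div_const x)

lemma antitoneOn_tsum_div_add (hd : ∀ k, 0 ≤ d k) (hsum : Summable d) :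
    AntitoneOn (fun x => ∑' k, d k / (d k + x)) (Ioi 0) := fun x hx y hy hxy =>
  (summable_div_add hd hsum hy).tsum_le_tsum
    (fun k => div_le_div_of_nonneg_left (hd k) (by linarith [hd k, mem_Ioi.mp hx]) (by linarith))
    (summable_div_add hd hsum hx)

lemma tsum_sq_div_add_sq_le (hd : ∀ k, 0 ≤ d k) (hsum : Summable d) {x : ℝ} (hx : 0 < x) :
    ∑' k, d k ^ 2 / (d k + x) ^ 2 ≤ ∑' k, d k / (d k + x) :=
  Summable.tsum_le_tsum (fun k => sq_div_add_sq_le_div_add (hd k) hx)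
    (.of_nonneg_of_le (fun k => by positivity) (fun k => sq_div_add_sq_le_div_add (hd k) hx)
      (summable_div_add hd hsum hx))
    (summable_div_add hd hsum hx)

lemma hasDerivAt_tsum_mul_div_add (hd : ∀ k, 0 ≤ d k) (hsum : Summable d) {x : ℝ}
    (hx : 0 < x) :
    HasDerivAt (fun z => ∑' k, z * (d k / (d k + z))) (∑' k, d k ^ 2 / (d k + x) ^ 2) x := by
  have hx2 : 0 < x / 2 := half_pos hx
  have hxmem : x ∈ Ioi (x / 2) := half_lt_self hx
  refine hasDerivAt_tsum_of_isPreconnected (hsum.div_const (x / 2)) isOpen_Ioi isPreconnected_Ioi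
    (fun k y hy => hasDerivAt_mul_div_add (by linarith [hd k, mem_Ioi.mp hy]))
    (fun k y (hy : x / 2 < y) => ?_) hxmem ((summable_div_add hd hsum hx).mul_left x) hxmem
  rw [Real.norm_of_nonneg (by positivity)]
  exact (sq_div_add_sq_le_div_add (hd k) (hx2.trans hy)).trans
    (div_le_div_of_nonneg_left (hd k) hx2 (by linarith [hd k]))

/-- The self-consistency equation `ϑ = λ + (ϑ/N) ∑ₖ dₖ/(dₖ+ϑ)` says `selfConsistencyMap d N ϑ = λ`. -/
noncomputable def selfConsistencyMap (d : ℕ → ℝ) (N : ℕ) (x : ℝ) : ℝ :=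
  x - x / N * ∑' k, d k / (d k + x)

lemma selfConsistencyMap_eq {N : ℕ} {lam x : ℝ}
    (h : x = lam + x / N * ∑' k, d k / (d k + x)) : selfConsistencyMap d N x = lam := by
  unfold selfConsistencyMap
  linarith

lemma hasDerivAt_selfConsistencyMap (hd : ∀ k, 0 ≤ d k) (hsum : Summable d) (N : ℕ) {x : ℝ}
    (hx : 0 < x) :
    HasDerivAt (selfConsistencyMap d N) (1 - 1 / N * ∑' k, d k ^ 2 / (d k + x) ^ 2) x := by
  have hmap : selfConsistencyMap d N = fun z => z - 1 / N * ∑' k, z * (d k / (d k + z)) := by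
    ext z
    rw [selfConsistencyMap, tsum_mul_left]
    ring
  rw [hmap]
  exact (hasDerivAt_id' x).sub ((hasDerivAt_tsum_mul_div_add hd hsum hx).const_mul _)

lemma isOpen_selfConsistencyMap_pos (hd : ∀ k, 0 ≤ d k) (hsum : Summable d) (N : ℕ) :
    IsOpen {x | 0 < x ∧ 0 < selfConsistencyMap d N x} :=
  ContinuousOn.isOpen_inter_preimage
    (fun _ hx => (hasDerivAt_selfConsistencyMap hd hsum N hx).continuousAt.continuousWithinAt)
    isOpen_Ioi isOpen_Ioi

/-- Where it is positive, `selfConsistencyMap d N x = x (1 - S(x)/N)` is a product of two positive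
increasing factors, `S(x) = ∑ₖ dₖ/(dₖ+x)` being decreasing. -/
lemma strictMonoOn_selfConsistencyMap (hd : ∀ k, 0 ≤ d k) (hsum : Summable d) (N : ℕ) :
    StrictMonoOn (selfConsistencyMap d N) {x | 0 < x ∧ 0 < selfConsistencyMap d N x} := by
  set S := fun x => ∑' k, d k / (d k + x)
  have hfactor (x : ℝ) : selfConsistencyMap d N x = x * (1 - S x / N) := by
    simp only [selfConsistencyMap, S]
    ring
  rintro x ⟨hx, hgx⟩ y ⟨hy, -⟩ hxy
  have hcx : 0 < 1 - S x / N := pos_of_mul_pos_right ((hfactor x) ▸ hgx) hx.le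
  have hS : S y / N ≤ S x / N :=
    div_le_div_of_nonneg_right (antitoneOn_tsum_div_add hd hsum hx hy hxy.le) N.cast_nonneg
  calc selfConsistencyMap d N x = x * (1 - S x / N) := hfactor x
    _ < y * (1 - S x / N) := by gcongr
    _ ≤ y * (1 - S y / N) := by gcongr
    _ = selfConsistencyMap d N y := (hfactor y).symm

lemma div_le_one_sub_tsum_sq_div_add_sq (hd : ∀ k, 0 ≤ d k) (hsum : Summable d) {N : ℕ}
    {lam x : ℝ} (hx : 0 < x) (h : x = lam + x / N * ∑' k, d k / (d k + x)) :
    lam / x ≤ 1 - 1 / N * ∑' k, d k ^ 2 / (d k + x) ^ 2 := by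
  rw [div_le_iff₀ hx]
  calc lam = x - x / N * ∑' k, d k / (d k + x) := by linarith
    _ ≤ x - x / N * ∑' k, d k ^ 2 / (d k + x) ^ 2 :=
      sub_le_sub_left (mul_le_mul_of_nonneg_left (tsum_sq_div_add_sq_le hd hsum hx)
        (by positivity)) x
    _ = (1 - 1 / N * ∑' k, d k ^ 2 / (d k + x) ^ 2) * x := by ring

end SelfConsistent

open SelfConsistent in
theorem sct_deriv_formula_and_bounds_general (d : ℕ → ℝ) (hd : ∀ k, 0 ≤ d k) (hsum : Summable d)
    (N : ℕ) (θ : ℝ → ℝ)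
    (hθ : ∀ lam, 0 < lam → 0 < θ lam ∧
      θ lam = lam + (θ lam / N) * ∑' k, d k / (d k + θ lam)) :
    ∀ lam, 0 < lam →
      HasDerivAt θ (1 / (1 - (1 / N) * ∑' k, (d k) ^ 2 / (d k + θ lam) ^ 2)) lam ∧
      1 ≤ 1 / (1 - (1 / N) * ∑' k, (d k) ^ 2 / (d k + θ lam) ^ 2) ∧
      1 / (1 - (1 / N) * ∑' k, (d k) ^ 2 / (d k + θ lam) ^ 2) ≤ θ lam / lam := by
  intro lam hlam
  obtain ⟨hθpos, hθeq⟩ := hθ lam hlam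
  have hinv : LeftInvOn (selfConsistencyMap d N) θ (Ioi 0) := fun y hy =>
    selfConsistencyMap_eq (hθ y hy).2
  have hcont : ContinuousAt θ lam :=
    (strictMonoOn_selfConsistencyMap hd hsum N).continuousAt_of_leftInvOn isOpen_Ioi
      (isOpen_selfConsistencyMap_pos hd hsum N)
      (fun y hy => ⟨(hθ y hy).1, (hinv hy).symm ▸ hy⟩) (fun _ hx => hx.2) hinv hlam
  have hlower := div_le_one_sub_tsum_sq_div_add_sq hd hsum hθpos hθeq
  have hpos := (div_pos hlam hθpos).trans_le hlower
  refine ⟨?_, one_le_one_div hpos (sub_le_self _ (by positivity)), ?_⟩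
  · rw [one_div]
    exact (hasDerivAt_selfConsistencyMap hd hsum N hθpos).of_local_left_inverse hcont hpos.ne'
      (eventually_of_mem (Ioi_mem_nhds hlam) hinv)
  · calc _ ≤ 1 / (lam / θ lam) := one_div_le_one_div_of_le (div_pos hlam hθpos) hlower
      _ = θ lam / lam := one_div_div _ _

/-- the SCT is differentiable in `λ` with derivative
`∂_λϑ = 1/(1 − (1/N)∑_k d_k²/(d_k+ϑ)²)`, and `1 ≤ ∂_λϑ ≤ ϑ/λ`. -/
theorem sct_deriv_formula_and_bounds (d : ℕ → ℝ) (hd : ∀ k, 0 ≤ d k) (hsum : Summable d)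
    (N : ℕ) (hN : 0 < N) (θ : ℝ → ℝ)
    (hθ : ∀ lam, 0 < lam → 0 < θ lam ∧
      θ lam = lam + (θ lam / N) * ∑' k, d k / (d k + θ lam)) :
    ∀ lam, 0 < lam →
      HasDerivAt θ (1 / (1 - (1 / N) * ∑' k, (d k) ^ 2 / (d k + θ lam) ^ 2)) lam ∧
      1 ≤ 1 / (1 - (1 / N) * ∑' k, (d k) ^ 2 / (d k + θ lam) ^ 2) ∧
      1 / (1 - (1 / N) * ∑' k, (d k) ^ 2 / (d k + θ lam) ^ 2) ≤ θ lam / lam :=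
  sct_deriv_formula_and_bounds_general d hd hsum N θ hθ
end

section
/- Let (d_k)_{k≥1} be positive reals with c_ℓ k^{−β} ≤ d_k ≤ c_h k^{−β} for some β > 1 and c_ℓ, c_h > 0. Define the effective dimension N(t) = ∑_k d_k/(t + d_k) for t > 0. Then N(t) = Θ(t^{−1/β}) as t → 0⁺, i.e., there exist constants a, b > 0 and t₀ > 0 such that a·t^{−1/β} ≤ N(t) ≤ b·t^{−1/β} for all 0 < t < t₀. -/
/-!
Each term `d/(t+d)` is at least `1/2` when `d ≥ t` and at most `min 1 (d/t)`. Put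
`x = (c/t)^{1/β}`, the index where `c k^{-β}` crosses the level `t`. With `c = c_ℓ`, the first
`⌊x⌋` terms are all at least `1/2`, so `N(t) ≥ x/4`. With `c = c_h`, the first `⌈x⌉` terms
contribute at most `x + 1`, and the tail is at most `t⁻¹ ∑_{k ≥ ⌈x⌉} d_k`, which is at most
`(c/t) x^{1-β}/(β-1) = x/(β-1)` by comparison with the telescoping sum of `k^{1-β}`.
-/

open Finset

noncomputable def effDim (d : ℕ → ℝ) (t : ℝ) : ℝ := ∑' k, d k / (t + d k)

section EffDim

variable {d : ℕ → ℝ} {t : ℝ}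

lemma summable_div_add (ht : 0 < t) (hd0 : ∀ k, 0 ≤ d k) (hds : Summable d) :
    Summable fun k => d k / (t + d k) :=
  (hds.div_const t).of_nonneg_of_le (fun k => by have := hd0 k; positivity)
    fun k => div_le_div_of_nonneg_left (hd0 k) ht (by linarith [hd0 k])

lemma card_div_two_le_effDim (ht : 0 < t) (hd0 : ∀ k, 0 ≤ d k) (hds : Summable d) {K : ℕ}
    (hK : ∀ k < K, t ≤ d k) : (K : ℝ) / 2 ≤ effDim d t :=
  calc (K : ℝ) / 2 = ∑ _k ∈ range K, (1 / 2 : ℝ) := by simp; ring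
    _ ≤ ∑ k ∈ range K, d k / (t + d k) := sum_le_sum fun k hk => by
        rw [div_le_div_iff₀ two_pos (by linarith [hd0 k])]
        linarith [hK k (mem_range.1 hk)]
    _ ≤ effDim d t :=
        (summable_div_add ht hd0 hds).sum_le_tsum _ fun k _ => by have := hd0 k; positivity

lemma effDim_le_add_tsum_div (ht : 0 < t) (hd0 : ∀ k, 0 ≤ d k) (hds : Summable d) (K : ℕ) :
    effDim d t ≤ K + (∑' n, d (n + K)) / t := by
  have hs := summable_div_add ht hd0 hds
  rw [effDim, ← hs.sum_add_tsum_nat_add K, ← tsum_div_const]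
  refine add_le_add ?_ ?_
  · calc ∑ k ∈ range K, d k / (t + d k) ≤ ∑ _k ∈ range K, (1 : ℝ) :=
          sum_le_sum fun k _ => (div_le_one (by linarith [hd0 k])).2 (by linarith)
      _ = K := by simp
  · exact ((summable_nat_add_iff K).2 hs).tsum_le_tsum
      (fun n => div_le_div_of_nonneg_left (hd0 _) ht (by linarith [hd0 (n + K)]))
      (((summable_nat_add_iff K).2 hds).div_const t)

end EffDim

lemma mul_rpow_neg_le_sub_rpow {β y : ℝ} (hβ : 1 ≤ β) (hy : 0 < y) :
    (β - 1) * (y + 1) ^ (-β) ≤ y ^ (1 - β) - (y + 1) ^ (1 - β) := by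
  obtain ⟨c, ⟨hyc, hcy⟩, hslope⟩ := exists_hasDerivAt_eq_slope (fun x : ℝ => x ^ (1 - β))
    (fun x => (1 - β) * x ^ (1 - β - 1)) (lt_add_one y)
    (fun x hx => (Real.continuousAt_rpow_const x _
      (Or.inl (hy.trans_le hx.1).ne')).continuousWithinAt)
    (fun x hx => Real.hasDerivAt_rpow_const (Or.inl (hy.trans hx.1).ne'))
  have hc : 0 < c := hy.trans hyc
  rw [add_sub_cancel_left, div_one, sub_sub_cancel_left] at hslope
  calc (β - 1) * (y + 1) ^ (-β) ≤ (β - 1) * c ^ (-β) := 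
        mul_le_mul_of_nonneg_left (Real.rpow_le_rpow_of_nonpos hc hcy.le (by linarith))
          (by linarith)
    _ = y ^ (1 - β) - (y + 1) ^ (1 - β) := by linear_combination -hslope

lemma sum_range_rpow_neg_le {β y : ℝ} (hβ : 1 < β) (hy : 0 < y) (N : ℕ) :
    ∑ n ∈ range N, (y + n + 1) ^ (-β) ≤ y ^ (1 - β) / (β - 1) := by
  have hβ1 : 0 < β - 1 := sub_pos.2 hβ
  rw [le_div_iff₀ hβ1, sum_mul]
  calc ∑ n ∈ range N, (y + n + 1) ^ (-β) * (β - 1)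
      ≤ ∑ n ∈ range N, ((y + n) ^ (1 - β) - (y + (n + 1 : ℕ)) ^ (1 - β)) :=
        sum_le_sum fun n _ => by
          rw [mul_comm, Nat.cast_succ, ← add_assoc]
          exact mul_rpow_neg_le_sub_rpow hβ.le (by positivity)
    _ = y ^ (1 - β) - (y + N) ^ (1 - β) := by
        rw [sum_range_sub' (fun n : ℕ => (y + n) ^ (1 - β)), Nat.cast_zero, add_zero]
    _ ≤ y ^ (1 - β) := sub_le_self _ (by positivity)

lemma div_rpow_one_div_eq {c t β : ℝ} (hc : 0 ≤ c) (ht : 0 < t) :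
    (c / t) ^ (1 / β) = c ^ (1 / β) * t ^ (-1 / β) := by
  rw [Real.div_rpow hc ht.le, neg_div, Real.rpow_neg ht.le, div_eq_mul_inv]

lemma mul_div_rpow_one_div_rpow_neg {c t β : ℝ} (hc : 0 < c) (ht : 0 < t) (hβ : β ≠ 0) :
    c * ((c / t) ^ (1 / β)) ^ (-β) = t := by
  rw [← Real.rpow_mul (by positivity), one_div_mul_eq_div, neg_div, div_self hβ,
    Real.rpow_neg_one, inv_div, mul_div_cancel₀ _ hc.ne']

lemma one_le_div_rpow {c t β : ℝ} (ht : 0 < t) (htc : t ≤ c) (hβ : 0 < β) :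
    1 ≤ (c / t) ^ (1 / β) :=
  Real.one_le_rpow ((one_le_div ht).2 htc) (by positivity)

section PowerLaw

variable {d : ℕ → ℝ} {t β c x : ℝ}

lemma div_four_le_effDim_of_rpow_le (hβ : 0 ≤ β) (ht : 0 < t) (hd0 : ∀ k, 0 ≤ d k)
    (hds : Summable d) (hd : ∀ k : ℕ, c * ((k : ℝ) + 1) ^ (-β) ≤ d k) (hx : 1 ≤ x)
    (hxt : t ≤ c * x ^ (-β)) :
    x / 4 ≤ effDim d t := by
  have hx0 : 0 < x := one_pos.trans_le hx
  have hc : 0 < c := pos_of_mul_pos_left (ht.trans_le hxt) (by positivity)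
  set K := ⌊x⌋₊
  have hK : 1 ≤ K := Nat.one_le_floor_iff x |>.2 hx
  have hxK : x < 2 * K := by
    have : (1 : ℝ) ≤ K := by exact_mod_cast hK
    linarith [Nat.lt_floor_add_one x]
  refine (show x / 4 ≤ (K : ℝ) / 2 by linarith).trans
    (card_div_two_le_effDim ht hd0 hds fun k hk => ?_)
  have hkx : (k : ℝ) + 1 ≤ x := by
    have : (k + 1 : ℝ) ≤ K := by exact_mod_cast hk
    exact this.trans (Nat.floor_le hx0.le)
  calc t ≤ c * x ^ (-β) := hxt
    _ ≤ c * ((k : ℝ) + 1) ^ (-β) :=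
        mul_le_mul_of_nonneg_left (Real.rpow_le_rpow_of_nonpos (by positivity) hkx (by linarith))
          hc.le
    _ ≤ d k := hd k

lemma tsum_nat_add_le_of_le_rpow (hβ : 1 < β) (hd0 : ∀ k, 0 ≤ d k)
    (hd : ∀ k : ℕ, d k ≤ c * ((k : ℝ) + 1) ^ (-β)) {K : ℕ} (hK : 0 < K) :
    ∑' n, d (n + K) ≤ c * ((K : ℝ) ^ (1 - β) / (β - 1)) := by
  have hc : 0 ≤ c := by simpa using (hd0 0).trans (hd 0)
  refine Real.tsum_le_of_sum_range_le (fun n => hd0 _) fun N => ?_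
  calc ∑ n ∈ range N, d (n + K) ≤ ∑ n ∈ range N, c * ((K : ℝ) + n + 1) ^ (-β) :=
        sum_le_sum fun n _ => by simpa [add_comm] using hd (n + K)
    _ ≤ c * ((K : ℝ) ^ (1 - β) / (β - 1)) := by
        rw [← mul_sum]
        exact mul_le_mul_of_nonneg_left (sum_range_rpow_neg_le hβ (by positivity) N) hc

lemma effDim_le_of_le_rpow (hβ : 1 < β) (ht : 0 < t) (hd0 : ∀ k, 0 ≤ d k) (hds : Summable d)
    (hd : ∀ k : ℕ, d k ≤ c * ((k : ℝ) + 1) ^ (-β)) (hx : 1 ≤ x) (hxt : c * x ^ (-β) ≤ t) :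
    effDim d t ≤ (2 + (β - 1)⁻¹) * x := by
  have hx0 : 0 < x := one_pos.trans_le hx
  have hβ1 : 0 < β - 1 := sub_pos.2 hβ
  have hc : 0 ≤ c := by simpa using (hd0 0).trans (hd 0)
  set K := ⌈x⌉₊
  have hxK : x ≤ K := Nat.le_ceil x
  have hK : 0 < K := Nat.ceil_pos.2 hx0
  have htail : (∑' n, d (n + K)) / t ≤ x / (β - 1) := by
    rw [div_le_iff₀ ht]
    calc ∑' n, d (n + K) ≤ c * ((K : ℝ) ^ (1 - β) / (β - 1)) :=
          tsum_nat_add_le_of_le_rpow hβ hd0 hd hK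
      _ ≤ c * (x ^ (1 - β) / (β - 1)) := by
          gcongr c * (?_ / _)
          exact Real.rpow_le_rpow_of_nonpos hx0 hxK (by linarith)
      _ = c * x ^ (-β) * x / (β - 1) := by
          rw [sub_eq_neg_add, Real.rpow_add hx0, Real.rpow_one]; ring
      _ ≤ t * x / (β - 1) := by gcongr
      _ = x / (β - 1) * t := by ring
  calc effDim d t ≤ K + (∑' n, d (n + K)) / t := effDim_le_add_tsum_div ht hd0 hds K
    _ ≤ (x + 1) + x / (β - 1) := add_le_add (Nat.ceil_lt_add_one hx0.le).le htail
    _ ≤ (2 + (β - 1)⁻¹) * x := by rw [div_eq_mul_inv]; nlinarith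

end PowerLaw

lemma summable_nat_add_one_rpow_neg {β : ℝ} (hβ : 1 < β) :
    Summable fun k : ℕ => ((k : ℝ) + 1) ^ (-β) := by
  simpa using (summable_nat_add_iff 1).2 (Real.summable_nat_rpow.2 (neg_lt_neg hβ))

/-- under the power-law decay `d_k = Θ(k^{−β})` (indexing `k ≥ 1` as `k+1`),
the effective dimension `N(t) = ∑_k d_k/(t + d_k)` satisfies `N(t) = Θ(t^{−1/β})` as `t → 0⁺`. -/
theorem effective_dimension_theta (d : ℕ → ℝ) (β cl ch : ℝ)
    (hβ : 1 < β) (hcl : 0 < cl) (hch : 0 < ch)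
    (hd : ∀ k : ℕ, cl * ((k : ℝ) + 1) ^ (-β) ≤ d k ∧ d k ≤ ch * ((k : ℝ) + 1) ^ (-β)) :
    ∃ a b t₀ : ℝ, 0 < a ∧ 0 < b ∧ 0 < t₀ ∧
      ∀ t : ℝ, 0 < t → t < t₀ →
        a * t ^ (-1 / β) ≤ (∑' k, d k / (t + d k)) ∧
        (∑' k, d k / (t + d k)) ≤ b * t ^ (-1 / β) := by
  have hβ0 : 0 < β := zero_lt_one.trans hβ
  have hβ1 : 0 < β - 1 := sub_pos.2 hβ
  have hd0 : ∀ k, 0 ≤ d k := fun k => (by positivity : 0 ≤ cl * _).trans (hd k).1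
  have hds : Summable d := (summable_nat_add_one_rpow_neg hβ).mul_left ch
    |>.of_nonneg_of_le hd0 fun k => (hd k).2
  refine ⟨cl ^ (1 / β) / 4, (2 + (β - 1)⁻¹) * ch ^ (1 / β), min cl ch, by positivity,
    by positivity, lt_min hcl hch, fun t ht htt₀ => ⟨?_, ?_⟩⟩
  · calc cl ^ (1 / β) / 4 * t ^ (-1 / β) = (cl / t) ^ (1 / β) / 4 := by
          rw [div_rpow_one_div_eq hcl.le ht]; ring
      _ ≤ effDim d t :=
          div_four_le_effDim_of_rpow_le hβ0.le ht hd0 hds (fun k => (hd k).1)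
          (one_le_div_rpow ht (htt₀.trans_le (min_le_left _ _)).le hβ0)
          (mul_div_rpow_one_div_rpow_neg hcl ht hβ0.ne').ge
  · calc effDim d t ≤ (2 + (β - 1)⁻¹) * (ch / t) ^ (1 / β) :=
          effDim_le_of_le_rpow hβ ht hd0 hds (fun k => (hd k).2)
          (one_le_div_rpow ht (htt₀.trans_le (min_le_right _ _)).le hβ0)
          (mul_div_rpow_one_div_rpow_neg hch ht hβ0.ne').le
      _ = (2 + (β - 1)⁻¹) * ch ^ (1 / β) * t ^ (-1 / β) := by
          rw [div_rpow_one_div_eq hch.le ht]; ring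
end

section
/- Let (d_k)_{k≥1} be positive reals with c_ℓ k^{−β} ≤ d_k ≤ c_h k^{−β} for some β > 1. Let ϑ₀(N) denote the unique t > 0 such that ∑_k d_k/(t + d_k) = N. Then ϑ₀(N) = Θ(N^{−β}), i.e., there exist constants a', b' > 0 with a' N^{−β} ≤ ϑ₀(N) ≤ b' N^{−β} for all N ≥ 1. -/
open Real Finset

lemma mvt_step {β : ℝ} (hβ : 1 < β) {n : ℝ} (hn : 1 ≤ n) :
    (β - 1) * (n + 1) ^ (-β) ≤ n ^ (1 - β) - (n + 1) ^ (1 - β) := by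
  have hn0 : (0:ℝ) < n := lt_of_lt_of_le one_pos hn
  have hlt : n < n + 1 := by linarith
  obtain ⟨c, hc, hderiv⟩ := exists_hasDerivAt_eq_slope (fun x : ℝ => x ^ (1 - β))
      (fun x : ℝ => (1 - β) * x ^ (1 - β - 1)) hlt
      (by
        apply ContinuousOn.rpow_const continuousOn_id
        intro x hx
        exact Or.inl (ne_of_gt (lt_of_lt_of_le hn0 hx.1)))
      (fun x hx => Real.hasDerivAt_rpow_const (Or.inl (ne_of_gt (lt_trans hn0 hx.1))))
  have hc0 : 0 < c := lt_trans hn0 hc.1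
  have hce : (1 - β) * c ^ (1 - β - 1) = (n + 1) ^ (1 - β) - n ^ (1 - β) := by
    rw [hderiv]; ring_nf
  have hmono : (n + 1) ^ (-β) ≤ c ^ (-β) :=
    Real.rpow_le_rpow_of_nonpos hc0 (le_of_lt hc.2) (by linarith)
  have : n ^ (1 - β) - (n + 1) ^ (1 - β) = (β - 1) * c ^ (-β) := by
    have : (1 - β - 1) = -β := by ring
    rw [this] at hce
    linarith [hce]
  rw [this]
  have hβ1 : (0:ℝ) ≤ β - 1 := by linarith
  exact mul_le_mul_of_nonneg_left hmono hβ1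

lemma tail_bound {β : ℝ} (hβ : 1 < β) {m : ℕ} (hm : 1 ≤ m) :
    ∑' k : ℕ, (((k + m : ℕ) : ℝ) + 1) ^ (-β) ≤ (m : ℝ) ^ (1 - β) / (β - 1) := by
  have hβ1 : (0:ℝ) < β - 1 := by linarith
  apply Real.tsum_le_of_sum_range_le (fun n => Real.rpow_nonneg (by positivity) _)
  intro n
  have key : ∀ k ∈ Finset.range n, (((k + m : ℕ) : ℝ) + 1) ^ (-β) ≤
      (((m + k : ℕ) : ℝ) ^ (1 - β) - ((m + (k+1) : ℕ) : ℝ) ^ (1 - β)) / (β - 1) := by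
    intro k _
    rw [le_div_iff₀ hβ1]
    have h1 : (1:ℝ) ≤ ((m + k : ℕ) : ℝ) := by
        exact_mod_cast le_trans hm (Nat.le_add_right m k)
    have := mvt_step hβ h1
    have e1 : ((m + k : ℕ) : ℝ) + 1 = ((m + (k+1) : ℕ) : ℝ) := by push_cast; ring
    have e2 : ((k + m : ℕ) : ℝ) + 1 = ((m + k : ℕ) : ℝ) + 1 := by push_cast; ring
    rw [e2, ← e1, mul_comm]
    linarith
  calc ∑ k ∈ Finset.range n, (((k + m : ℕ) : ℝ) + 1) ^ (-β)
      ≤ ∑ k ∈ Finset.range n, (((m + k : ℕ) : ℝ) ^ (1 - β) - ((m + (k+1) : ℕ) : ℝ) ^ (1 - β)) / (β - 1) :=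
        Finset.sum_le_sum key
    _ = (((m + 0 : ℕ) : ℝ) ^ (1 - β) - ((m + n : ℕ) : ℝ) ^ (1 - β)) / (β - 1) := by
        rw [← Finset.sum_div, Finset.sum_range_sub' (fun i => ((m + i : ℕ) : ℝ) ^ (1 - β))]
    _ ≤ (m : ℝ) ^ (1 - β) / (β - 1) := by
        have : (0:ℝ) ≤ ((m + n : ℕ) : ℝ) ^ (1 - β) := Real.rpow_nonneg (by positivity) _
        have e : ((m + 0 : ℕ) : ℝ) = (m:ℝ) := by push_cast; ring
        rw [e]
        gcongr
        linarith

set_option maxHeartbeats 1000000 in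
/-- under power-law decay `d_k = Θ(k^{−β})`, the ridgeless SCT `ϑ₀(N)`,
defined by `∑_k d_k/(ϑ₀(N) + d_k) = N`, satisfies `ϑ₀(N) = Θ(N^{−β})`. -/
theorem ridgeless_sct_theta (d : ℕ → ℝ) (β cl ch : ℝ)
    (hβ : 1 < β) (hcl : 0 < cl) (hch : 0 < ch)
    (hd : ∀ k : ℕ, cl * ((k : ℝ) + 1) ^ (-β) ≤ d k ∧ d k ≤ ch * ((k : ℝ) + 1) ^ (-β))
    (θ₀ : ℕ → ℝ)
    (hθ₀ : ∀ N : ℕ, 1 ≤ N → 0 < θ₀ N ∧ (∑' k, d k / (θ₀ N + d k)) = N) :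
    ∃ a b : ℝ, 0 < a ∧ 0 < b ∧ ∀ N : ℕ, 1 ≤ N →
      a * (N : ℝ) ^ (-β) ≤ θ₀ N ∧ θ₀ N ≤ b * (N : ℝ) ^ (-β) := by
  have hβ0 : (0:ℝ) < β := by linarith
  have hβ1 : (0:ℝ) < β - 1 := by linarith
  have dpos : ∀ k, 0 < d k := fun k => lt_of_lt_of_le (by positivity) (hd k).1
  have ha_sum : Summable (fun k : ℕ => ((k:ℝ)+1)^(-β)) := by
    have h := Real.summable_nat_rpow.2 (show -β < -1 by linarith)
    have h2 := (summable_nat_add_iff 1).2 h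
    refine h2.congr fun n => ?_
    push_cast
    ring_nf
  have sd : Summable d := Summable.of_nonneg_of_le (fun k => (dpos k).le)
    (fun k => (hd k).2) (ha_sum.mul_left ch)
  set S := ∑' k, d k with hSdef
  have hS0 : 0 < S := lt_of_lt_of_le (dpos 0) (Summable.le_tsum sd 0 fun j _ => (dpos j).le)
  refine ⟨cl * 4 ^ (-β), ch * ((β/(β-1)) * (1 + (S/ch)^(1/β))) ^ β, by positivity,
    by positivity, ?_⟩
  intro N hN
  obtain ⟨hθpos, hEq⟩ := hθ₀ N hN
  set θ := θ₀ N with hθdef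
  have hN1 : (1:ℝ) ≤ (N:ℝ) := by exact_mod_cast hN
  have hNpos : (0:ℝ) < N := by linarith
  have tn : ∀ k, 0 ≤ d k / (θ + d k) := fun k =>
    div_nonneg (dpos k).le (add_pos hθpos (dpos k)).le
  have htle : ∀ k, d k / (θ + d k) ≤ d k / θ := fun k =>
    div_le_div_of_nonneg_left (dpos k).le hθpos (le_add_of_nonneg_right (dpos k).le)
  have st : Summable (fun k => d k / (θ + d k)) :=
    Summable.of_nonneg_of_le tn htle (sd.div_const θ)
  -- Part 1 : θ ≤ S
  have hNS : (N:ℝ) ≤ S / θ := by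
    rw [← hEq]
    calc ∑' k, d k/(θ+d k) ≤ ∑' k, d k / θ := Summable.tsum_le_tsum htle st (sd.div_const θ)
      _ = S / θ := by rw [tsum_div_const]
  have hθS : θ ≤ S := by
    have h' : (N:ℝ) * θ ≤ S := (le_div_iff₀ hθpos).1 hNS
    nlinarith
  constructor
  · -- lower bound
    rcases le_or_gt cl θ with hcase | hcase
    · have h1 : (N:ℝ) ^ (-β) ≤ 1 :=
        Real.rpow_le_one_of_one_le_of_nonpos hN1 (by linarith)
      have h2 : (4:ℝ) ^ (-β) ≤ 1 :=
        Real.rpow_le_one_of_one_le_of_nonpos (by norm_num) (by linarith)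
      have h3 : (0:ℝ) ≤ (N:ℝ) ^ (-β) := Real.rpow_nonneg hNpos.le _
      have h4 : (0:ℝ) ≤ (4:ℝ) ^ (-β) := Real.rpow_nonneg (by norm_num) _
      have key : cl * 4 ^ (-β) * (N:ℝ) ^ (-β) ≤ cl * 1 * 1 :=
        mul_le_mul (mul_le_mul le_rfl h2 h4 hcl.le) h1 h3 (by positivity)
      linarith
    · set x := (cl/θ) ^ (1/β) with hxdef
      have hclθ : 1 < cl/θ := (one_lt_div hθpos).2 hcase
      have hx1 : 1 ≤ x := Real.one_le_rpow hclθ.le (by positivity)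
      have hx0 : 0 < x := lt_of_lt_of_le one_pos hx1
      set m := ⌊x⌋₊ with hmdef
      have hm1 : 1 ≤ m := Nat.le_floor (by exact_mod_cast hx1)
      have hxβ : x ^ β = cl/θ := by
        rw [hxdef, ← Real.rpow_mul (by positivity), one_div_mul_cancel (ne_of_gt hβ0),
          Real.rpow_one]
      have hdk : ∀ k, k < m → θ ≤ d k := by
        intro k hk
        have hk1 : ((k:ℝ)+1) ≤ x := by
          have hkm : ((k:ℝ)+1) ≤ (m:ℝ) := by exact_mod_cast hk
          exact le_trans hkm (Nat.floor_le hx0.le)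
        have hpow : ((k:ℝ)+1) ^ β ≤ cl/θ := by
          rw [← hxβ]; exact Real.rpow_le_rpow (by positivity) hk1 hβ0.le
        have hkp : (0:ℝ) < ((k:ℝ)+1) ^ β := Real.rpow_pos_of_pos (by positivity) _
        have : θ ≤ cl * ((k:ℝ)+1)^(-β) := by
          rw [Real.rpow_neg (by positivity), ← div_eq_mul_inv, le_div_iff₀ hkp]
          have h' := (le_div_iff₀ hθpos).1 hpow
          nlinarith [h']
        calc θ ≤ cl * ((k:ℝ)+1)^(-β) := this
          _ ≤ d k := (hd k).1
      have hsum_low : (m:ℝ)/2 ≤ (N:ℝ) := by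
        rw [← hEq]
        calc (m:ℝ)/2 = ∑ _k ∈ Finset.range m, (1/2 : ℝ) := by
              simp [Finset.sum_const]; ring
          _ ≤ ∑ k ∈ Finset.range m, d k/(θ+d k) := by
              apply Finset.sum_le_sum
              intro k hk
              rw [Finset.mem_range] at hk
              rw [div_le_div_iff₀ (by norm_num) (add_pos hθpos (dpos k))]
              linarith [hdk k hk]
          _ ≤ ∑' k, d k/(θ+d k) := Summable.sum_le_tsum _ (fun k _ => tn k) st
      have hxm : x ≤ 2*(m:ℝ) := by
        have h1 : x < (m:ℝ) + 1 := Nat.lt_floor_add_one x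
        have h2 : (1:ℝ) ≤ (m:ℝ) := by exact_mod_cast hm1
        linarith
      have hx4N : x ≤ 4*(N:ℝ) := by linarith
      have hkey : cl/θ ≤ (4*(N:ℝ))^β := by
        rw [← hxβ]; exact Real.rpow_le_rpow hx0.le hx4N hβ0.le
      have h4Np : (0:ℝ) < (4*(N:ℝ))^β := Real.rpow_pos_of_pos (by positivity) _
      have hθlow : cl * (4*(N:ℝ))^(-β) ≤ θ := by
        rw [Real.rpow_neg (by positivity), ← div_eq_mul_inv, div_le_iff₀ h4Np]
        rw [div_le_iff₀ hθpos] at hkey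
        linarith [hkey]
      have hmul : (4*(N:ℝ))^(-β) = 4^(-β) * (N:ℝ)^(-β) :=
        Real.mul_rpow (by norm_num) hNpos.le
      rw [hmul] at hθlow
      linarith [hθlow]
  · -- upper bound
    set x := (ch/θ) ^ (1/β) with hxdef
    have hx0 : 0 < x := Real.rpow_pos_of_pos (by positivity) _
    set m := ⌊x⌋₊ + 1 with hmdef
    have hm1 : 1 ≤ m := Nat.le_add_left 1 _
    have hxm : x < (m:ℝ) := by
      have := Nat.lt_floor_add_one x
      push_cast [hmdef]
      exact_mod_cast this
    have hmp : (0:ℝ) < (m:ℝ) := lt_trans hx0 hxm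
    have hxβ : x ^ β = ch/θ := by
      rw [hxdef, ← Real.rpow_mul (by positivity), one_div_mul_cancel (ne_of_gt hβ0),
        Real.rpow_one]
    have hmβ : (m:ℝ)^(-β) ≤ θ/ch := by
      have h1 : (m:ℝ)^(-β) ≤ x^(-β) :=
        Real.rpow_le_rpow_of_nonpos hx0 hxm.le (by linarith)
      have h2 : x^(-β) = θ/ch := by
        rw [Real.rpow_neg hx0.le, hxβ, inv_div]
      linarith [h1, h2 ▸ h1]
    have tail := tail_bound hβ hm1
    have hshift : Summable (fun k : ℕ => d (k + m) / (θ + d (k + m))) :=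
      (summable_nat_add_iff m).2 st
    have hashift : Summable (fun k : ℕ => (ch/θ) * ((((k+m:ℕ)):ℝ)+1)^(-β)) := by
      have := ((summable_nat_add_iff m).2 ha_sum)
      exact this.mul_left _
    have h2 : ∑' k : ℕ, d (k+m) / (θ + d (k+m)) ≤ (ch/θ) * ((m:ℝ)^(1-β)/(β-1)) := by
      calc ∑' k : ℕ, d (k+m) / (θ + d (k+m))
          ≤ ∑' k : ℕ, (ch/θ) * ((((k+m:ℕ)):ℝ)+1)^(-β) := by
            apply Summable.tsum_le_tsum _ hshift hashift
            intro k
            calc d (k+m) / (θ + d (k+m)) ≤ d (k+m) / θ := htle (k+m)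
              _ ≤ (ch * ((((k+m:ℕ)):ℝ)+1)^(-β)) / θ := by
                  exact (div_le_div_iff_of_pos_right hθpos).2 (hd (k+m)).2
              _ = (ch/θ) * ((((k+m:ℕ)):ℝ)+1)^(-β) := by ring
        _ = (ch/θ) * ∑' k : ℕ, ((((k+m:ℕ)):ℝ)+1)^(-β) := tsum_mul_left
        _ ≤ (ch/θ) * ((m:ℝ)^(1-β)/(β-1)) := by
            apply mul_le_mul_of_nonneg_left tail (by positivity)
    have h1 : ∑ k ∈ Finset.range m, d k/(θ+d k) ≤ (m:ℝ) := by
      calc ∑ k ∈ Finset.range m, d k/(θ+d k) ≤ ∑ _k ∈ Finset.range m, (1:ℝ) := by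
            apply Finset.sum_le_sum
            intro k _
            rw [div_le_one (add_pos hθpos (dpos k))]
            linarith [hθpos]
        _ = (m:ℝ) := by simp
    have h3 : (ch/θ) * ((m:ℝ)^(1-β)/(β-1)) ≤ (m:ℝ)/(β-1) := by
      have hm' : (m:ℝ)^(1-β) = (m:ℝ) * (m:ℝ)^(-β) := by
        rw [show (1-β) = 1 + (-β) by ring, Real.rpow_add hmp, Real.rpow_one]
      rw [hm']
      have hch' : (ch/θ) * ((m:ℝ) * (m:ℝ)^(-β)) ≤ (m:ℝ) := by
        calc (ch/θ) * ((m:ℝ) * (m:ℝ)^(-β)) ≤ (ch/θ) * ((m:ℝ) * (θ/ch)) := by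
              apply mul_le_mul_of_nonneg_left _ (by positivity)
              exact mul_le_mul_of_nonneg_left hmβ hmp.le
          _ = (m:ℝ) := by field_simp
      calc (ch/θ) * ((m:ℝ) * (m:ℝ)^(-β) / (β-1))
          = ((ch/θ) * ((m:ℝ) * (m:ℝ)^(-β))) / (β-1) := by ring
        _ ≤ (m:ℝ)/(β-1) := (div_le_div_iff_of_pos_right hβ1).2 hch'
    have hNle : (N:ℝ) ≤ (m:ℝ) * (β/(β-1)) := by
      have hsplit := Summable.sum_add_tsum_nat_add m st
      rw [← hEq, ← hsplit]
      have : (m:ℝ) * (β/(β-1)) = (m:ℝ) + (m:ℝ)/(β-1) := by field_simp; ring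
      rw [this]
      have := le_trans h2 h3
      linarith [h1, this]
    -- m ≤ x * (1 + (S/ch)^(1/β))
    have hx0' : (ch/S)^(1/β) ≤ x := by
      apply Real.rpow_le_rpow (by positivity) _ (by positivity)
      exact div_le_div_of_nonneg_left hch.le hθpos hθS
    have hprod : (ch/S)^(1/β) * (S/ch)^(1/β) = 1 := by
      rw [← Real.mul_rpow (by positivity) (by positivity)]
      rw [div_mul_div_comm]
      rw [show ch * S / (S * ch) = 1 by field_simp]
      exact Real.one_rpow _
    have hSch0 : (0:ℝ) < (S/ch)^(1/β) := Real.rpow_pos_of_pos (by positivity) _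
    have hminv : 1 ≤ x * (S/ch)^(1/β) := by
      calc (1:ℝ) = (ch/S)^(1/β) * (S/ch)^(1/β) := hprod.symm
        _ ≤ x * (S/ch)^(1/β) := mul_le_mul_of_nonneg_right hx0' hSch0.le
    have hmle : (m:ℝ) ≤ x * (1 + (S/ch)^(1/β)) := by
      have hfl : (m:ℝ) ≤ x + 1 := by
        have := Nat.floor_le hx0.le
        push_cast [hmdef]
        linarith
      calc (m:ℝ) ≤ x + 1 := hfl
        _ ≤ x + x * (S/ch)^(1/β) := by linarith
        _ = x * (1 + (S/ch)^(1/β)) := by ring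
    set C := (β/(β-1)) * (1 + (S/ch)^(1/β)) with hCdef
    have hC0 : 0 < C := by positivity
    have hNCx : (N:ℝ) ≤ C * x := by
      calc (N:ℝ) ≤ (m:ℝ) * (β/(β-1)) := hNle
        _ ≤ (x * (1 + (S/ch)^(1/β))) * (β/(β-1)) :=
            mul_le_mul_of_nonneg_right hmle (by positivity)
        _ = C * x := by rw [hCdef]; ring
    have hNC : (N:ℝ)/C ≤ x := (div_le_iff₀' hC0).2 hNCx
    have hrp : ((N:ℝ)/C)^β ≤ ch/θ := by
      rw [← hxβ]
      exact Real.rpow_le_rpow (by positivity) hNC hβ0.le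
    have hNCp : (0:ℝ) < ((N:ℝ)/C)^β := Real.rpow_pos_of_pos (by positivity) _
    have hθup : θ ≤ ch / ((N:ℝ)/C)^β := by
      rw [le_div_iff₀ hNCp]
      rw [le_div_iff₀ hθpos] at hrp
      linarith [hrp]
    have halg : ch / ((N:ℝ)/C)^β = ch * C^β * (N:ℝ)^(-β) := by
      rw [Real.div_rpow (by positivity) hC0.le, Real.rpow_neg hNpos.le]
      have hNβ : (0:ℝ) < (N:ℝ)^β := Real.rpow_pos_of_pos hNpos _
      have hCβ : (0:ℝ) < C^β := Real.rpow_pos_of_pos hC0 _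
      field_simp
    rw [halg] at hθup
    exact hθup
end

section
/- Let z ∈ ℂ with Re(z) < 0. Let (a_k), (b_k) be complex numbers lying in the closed cone spanned by 1 and −1/z (i.e., each is of the form s − t/z with s, t ≥ 0), and let (d_k) be nonnegative reals with ∑_k d_k/|(1+a_k)(1+b_k)| < ∞. Then |z − ∑_k d_k/((1+a_k)(1+b_k))| ≥ |z|. -/
/-!
For `s, t ≥ 0`, `1 / (1 + s - t/z)` lies in the cone spanned by `1` and `-z`, so each summand
lies in the cone spanned by `1`, `-z` and `z²`. When `Re z ≤ 0` all three generators lie in the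
half-plane `{w | ⟪z, w⟫_ℝ ≤ 0}`, hence so does the sum `S`, and then
`‖z - S‖² = ‖z‖² - 2⟪z, S⟫_ℝ + ‖S‖² ≥ ‖z‖²`.
-/

open Complex
open scoped InnerProductSpace

theorem norm_le_norm_sub_of_inner_nonpos {F : Type*} [NormedAddCommGroup F]
    [InnerProductSpace ℝ F] {x y : F} (h : ⟪x, y⟫_ℝ ≤ 0) : ‖x‖ ≤ ‖x - y‖ := by
  have hsq : ‖x‖ ^ 2 ≤ ‖x - y‖ ^ 2 := by
    rw [norm_sub_sq_real]; nlinarith [sq_nonneg ‖y‖]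
  exact (pow_le_pow_iff_left₀ (norm_nonneg _) (norm_nonneg _) two_ne_zero).1 hsq

theorem inner_tsum_nonpos {F ι : Type*} [NormedAddCommGroup F] [InnerProductSpace ℝ F]
    {x : F} {f : ι → F} (hf : Summable f) (h : ∀ i, ⟪x, f i⟫_ℝ ≤ 0) :
    ⟪x, ∑' i, f i⟫_ℝ ≤ 0 := by
  rw [← innerSL_apply_apply, (innerSL ℝ x).map_tsum hf]
  exact tsum_nonpos h

/-- With `w = (1 + s) z - t`, the inverse is `z / w = z conj(w) / |w|²` and
`z conj(w) = (1 + s) |z|² - t z`. -/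
theorem Complex.exists_inv_one_add_sub_div_eq (z : ℂ) {s t : ℝ} (hs : 0 ≤ s) (ht : 0 ≤ t) :
    ∃ p q : ℝ, 0 ≤ p ∧ 0 ≤ q ∧ (1 + (s - t / z))⁻¹ = p - q * z := by
  rcases eq_or_ne z 0 with rfl | hz
  · exact ⟨(1 + s)⁻¹, 0, by positivity, le_rfl, by simp⟩
  set w : ℂ := (1 + s) * z - t
  refine ⟨(1 + s) * normSq z / normSq w, t / normSq w,
    div_nonneg (mul_nonneg (by positivity) (normSq_nonneg z)) (normSq_nonneg w),
    div_nonneg ht (normSq_nonneg w), ?_⟩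
  have hw : 1 + (s - t / z) = w / z := by field_simp; ring
  rw [hw, inv_div, div_eq_mul_inv, inv_def]
  push_cast
  rw [← mul_conj z]
  simp only [w, map_sub, map_mul, conj_ofReal, map_add, map_one]
  ring

theorem Complex.inner_sub_mul_mul_sub_mul_nonpos {z : ℂ} (hz : z.re ≤ 0) {p q p' q' : ℝ}
    (hp : 0 ≤ p) (hq : 0 ≤ q) (hp' : 0 ≤ p') (hq' : 0 ≤ q') :
    ⟪z, (p - q * z) * (p' - q' * z)⟫_ℝ ≤ 0 := by
  have hexpand : ⟪z, (p - q * z) * (p' - q' * z)⟫_ℝ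
      = p * p' * z.re - (p * q' + q * p') * normSq z + q * q' * normSq z * z.re := by
    rw [Complex.inner]
    simp only [mul_re, mul_im, sub_re, sub_im, ofReal_re, ofReal_im, conj_re, conj_im,
      normSq_apply]
    ring
  rw [hexpand]
  have hn := normSq_nonneg z
  nlinarith [mul_nonneg hp hp', mul_nonneg (mul_nonneg hq hq') hn,
    mul_nonneg (add_nonneg (mul_nonneg hp hq') (mul_nonneg hq hp')) hn]

/-- cone lemma: for `Re z < 0`, `a_k, b_k` in the cone spanned by `1` and
`−1/z`, and `d_k ≥ 0`, one has `|z − ∑_k d_k/((1+a_k)(1+b_k))| ≥ |z|`. -/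
theorem cone_distance_lemma (z : ℂ) (hz : z.re < 0) (a b : ℕ → ℂ) (d : ℕ → ℝ)
    (ha : ∀ k, ∃ s t : ℝ, 0 ≤ s ∧ 0 ≤ t ∧ a k = (s : ℂ) - (t : ℂ) / z)
    (hb : ∀ k, ∃ s t : ℝ, 0 ≤ s ∧ 0 ≤ t ∧ b k = (s : ℂ) - (t : ℂ) / z)
    (hd : ∀ k, 0 ≤ d k)
    (hsum : Summable (fun k => d k / ‖(1 + a k) * (1 + b k)‖)) :
    ‖z‖ ≤ ‖z - ∑' k, (d k : ℂ) / ((1 + a k) * (1 + b k))‖ := by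
  have hterm : ∀ k, ⟪z, (d k : ℂ) / ((1 + a k) * (1 + b k))⟫_ℝ ≤ 0 := by
    intro k
    obtain ⟨s, t, hs, ht, hak⟩ := ha k
    obtain ⟨s', t', hs', ht', hbk⟩ := hb k
    obtain ⟨p, q, hp, hq, hpq⟩ := exists_inv_one_add_sub_div_eq z hs ht
    obtain ⟨p', q', hp', hq', hpq'⟩ := exists_inv_one_add_sub_div_eq z hs' ht'
    rw [div_eq_mul_inv, mul_inv, hak, hbk, hpq, hpq', ← real_smul, real_inner_smul_right]
    exact mul_nonpos_of_nonneg_of_nonpos (hd k)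
      (inner_sub_mul_mul_sub_mul_nonpos hz.le hp hq hp' hq')
  have hsummable : Summable fun k => (d k : ℂ) / ((1 + a k) * (1 + b k)) := by
    refine Summable.of_norm (hsum.congr fun k => ?_)
    rw [norm_div, norm_real, Real.norm_of_nonneg (hd k)]
  exact norm_le_norm_sub_of_inner_nonpos (inner_tsum_nonpos hsummable hterm)
end

section
/- Let z ∈ ℂ with Re(z) < 0, N ∈ ℕ, and (d_ℓ) summable nonnegative reals. Let m̃ be the fixed point in the cone spanned by 1 and −1/z of ψ(x) = −(1/z)(1 − (1/N)∑_ℓ d_ℓ x/(1 + d_ℓ x)), and m̃_{(k)} the fixed point of the same function with the k-th term removed from the sum. Then |m̃_{(k)} − m̃| ≤ 1/(|z|·N). -/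
/-!
Subtracting the two fixed-point equations and using
`d b/(1 + d b) - d a/(1 + d a) = d (b - a)/((1 + d b)(1 + d a))` termwise gives
`(m̃_{(k)} - m̃) (z - W/N) = -(1/N) d_k m̃/(1 + d_k m̃)` with
`W = ∑_{ℓ ≠ k} d_ℓ/((1 + d_ℓ m̃_{(k)})(1 + d_ℓ m̃))`.
In the cone `Γ = {s - t/z : s, t ≥ 0}` real parts are nonnegative, so
`|d_k m̃/(1 + d_k m̃)| ≤ 1`, and `Re (z u v) ≤ 0` for `u, v ∈ Γ`; hence `Re (W/z) ≤ 0`,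
which forces `|z - W/N| ≥ |z|`.
-/

namespace Complex

theorem one_le_norm_one_add {w : ℂ} (hw : 0 ≤ w.re) : 1 ≤ ‖1 + w‖ :=
  calc (1 : ℝ) ≤ (1 + w).re := by simpa using hw
    _ ≤ ‖1 + w‖ := re_le_norm _

theorem one_add_ne_zero_of_re_nonneg {w : ℂ} (hw : 0 ≤ w.re) : 1 + w ≠ 0 :=
  norm_pos_iff.mp (zero_lt_one.trans_le (one_le_norm_one_add hw))

theorem norm_le_norm_one_add {w : ℂ} (hw : 0 ≤ w.re) : ‖w‖ ≤ ‖1 + w‖ := by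
  rw [← sq_le_sq₀ (norm_nonneg _) (norm_nonneg _), Complex.sq_norm, Complex.sq_norm,
    normSq_apply, normSq_apply]
  simp only [add_re, one_re, add_im, one_im, zero_add]
  nlinarith

theorem norm_div_one_add_le_one {w : ℂ} (hw : 0 ≤ w.re) : ‖w / (1 + w)‖ ≤ 1 := by
  rw [norm_div]
  exact div_le_one_of_le₀ (norm_le_norm_one_add hw) (norm_nonneg _)

theorem norm_div_one_add_le_norm {w : ℂ} (hw : 0 ≤ w.re) : ‖w / (1 + w)‖ ≤ ‖w‖ := by
  rw [norm_div]
  exact div_le_self (norm_nonneg _) (one_le_norm_one_add hw)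

theorem norm_le_norm_sub_of_re_div_nonpos {z w : ℂ} (h : (w / z).re ≤ 0) :
    ‖z‖ ≤ ‖z - w‖ := by
  rcases eq_or_ne z 0 with rfl | hz
  · simp
  have hsub : z - w = z * (1 + -(w / z)) := by field_simp; ring
  rw [hsub, norm_mul]
  exact le_mul_of_one_le_right (norm_nonneg _) (one_le_norm_one_add (by simpa using h))

theorem re_ofReal_div_nonpos {q : ℂ} (hq : q.re ≤ 0) {t : ℝ} (ht : 0 ≤ t) :
    ((t : ℂ) / q).re ≤ 0 := by
  rw [div_eq_mul_inv, re_ofReal_mul, inv_re]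
  exact mul_nonpos_of_nonneg_of_nonpos ht (div_nonpos_of_nonpos_of_nonneg hq (normSq_nonneg _))

theorem re_ofReal_mul_nonneg {a : ℝ} (ha : 0 ≤ a) {x : ℂ} (hx : 0 ≤ x.re) :
    0 ≤ ((a : ℂ) * x).re := by
  rw [re_ofReal_mul]
  exact mul_nonneg ha hx

end Complex

open Complex

theorem mul_div_one_add_mul_sub {K : Type*} [Field K] {d a b : K} (ha : 1 + d * a ≠ 0)
    (hb : 1 + d * b ≠ 0) :
    d * b / (1 + d * b) - d * a / (1 + d * a) = d / ((1 + d * b) * (1 + d * a)) * (b - a) := by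
  field_simp
  ring

section IteZero

variable {β α : Type*} [DecidableEq β]

theorem Summable.ite_eq_zero [AddCommGroup α] [TopologicalSpace α] [IsTopologicalAddGroup α]
    {f : β → α} (hf : Summable f) (k : β) : Summable fun l => if l = k then 0 else f l :=
  (hf.update k 0).congr fun _ => Function.update_apply ..

theorem tsum_ite_eq_zero_sub_tsum [NormedField α] [CompleteSpace α]
    {f g c : β → α} (hf : Summable f) (hg : Summable g) (hc : Summable c) (k : β) (δ : α)
    (h : ∀ l ≠ k, g l - f l = c l * δ) :
    (∑' l, if l = k then 0 else g l) - ∑' l, f l =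
      -f k + (∑' l, if l = k then 0 else c l) * δ := by
  rw [← (hg.ite_eq_zero k).tsum_sub hf]
  refine (tsum_congr fun l => ?_).trans
    ((hasSum_ite_eq k (-f k)).add ((hc.ite_eq_zero k).hasSum.mul_right δ)).tsum_eq
  by_cases hl : l = k
  · simp [hl]
  · simp [hl, h l hl]

end IteZero

/-- The paper's `Γ`, the convex cone spanned by `1` and `-z⁻¹`. -/
def oneNegInvCone (z : ℂ) : Set ℂ :=
  {w | ∃ s t : ℝ, 0 ≤ s ∧ 0 ≤ t ∧ w = (s : ℂ) - (t : ℂ) / z}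

section Cone

variable {z w u v : ℂ}

theorem re_nonneg_of_mem_oneNegInvCone (hz : z.re ≤ 0) (hw : w ∈ oneNegInvCone z) :
    0 ≤ w.re := by
  obtain ⟨s, t, hs, ht, rfl⟩ := hw
  simpa [sub_re] using (re_ofReal_div_nonpos hz ht).trans hs

theorem one_add_mul_mem_oneNegInvCone {a : ℝ} (ha : 0 ≤ a) (hw : w ∈ oneNegInvCone z) :
    1 + (a : ℂ) * w ∈ oneNegInvCone z := by
  obtain ⟨s, t, hs, ht, rfl⟩ := hw
  exact ⟨1 + a * s, a * t, by positivity, by positivity, by push_cast; ring⟩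

theorem re_mul_mul_nonpos_of_mem_oneNegInvCone (hz : z.re ≤ 0) (hu : u ∈ oneNegInvCone z)
    (hv : v ∈ oneNegInvCone z) : (z * (u * v)).re ≤ 0 := by
  obtain ⟨s, t, hs, ht, rfl⟩ := hu
  obtain ⟨s', t', hs', ht', rfl⟩ := hv
  rcases eq_or_ne z 0 with rfl | hz0
  · simp
  have hexpand : z * ((s - t / z) * (s' - t' / z)) =
      ((s * s' : ℝ) : ℂ) * z -
        ((s * t' + t * s' : ℝ) : ℂ) + ((t * t' : ℝ) : ℂ) / z := by
    push_cast; field_simp; ring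
  rw [hexpand, add_re, sub_re, re_ofReal_mul, ofReal_re]
  have := re_ofReal_div_nonpos hz (mul_nonneg ht ht')
  nlinarith [mul_nonneg hs hs', mul_nonneg hs ht', mul_nonneg ht hs']

theorem re_ofReal_div_mul_div_nonpos_of_mem_oneNegInvCone (hz : z.re ≤ 0)
    (hu : u ∈ oneNegInvCone z) (hv : v ∈ oneNegInvCone z) {d : ℝ} (hd : 0 ≤ d) :
    ((d : ℂ) / (u * v) / z).re ≤ 0 := by
  rw [div_div, mul_comm (u * v)]
  exact re_ofReal_div_nonpos (re_mul_mul_nonpos_of_mem_oneNegInvCone hz hu hv) hd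

end Cone

section Weights

variable {ι : Type*} {d : ι → ℝ}

theorem summable_mul_div_one_add_mul (hd : ∀ l, 0 ≤ d l) (hsum : Summable d) {x : ℂ}
    (hx : 0 ≤ x.re) :
    Summable fun l => (d l : ℂ) * x / (1 + (d l : ℂ) * x) := by
  refine (hsum.mul_right ‖x‖).of_norm_bounded fun l => ?_
  calc _ ≤ ‖(d l : ℂ) * x‖ := norm_div_one_add_le_norm (re_ofReal_mul_nonneg (hd l) hx)
    _ = d l * ‖x‖ := by rw [norm_mul, norm_real, Real.norm_of_nonneg (hd l)]

theorem summable_div_one_add_mul_mul_one_add_mul (hd : ∀ l, 0 ≤ d l) (hsum : Summable d)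
    {u v : ℂ} (hu : 0 ≤ u.re) (hv : 0 ≤ v.re) :
    Summable fun l => (d l : ℂ) / ((1 + (d l : ℂ) * u) * (1 + (d l : ℂ) * v)) := by
  refine hsum.of_norm_bounded fun l => ?_
  rw [norm_div, norm_real, Real.norm_of_nonneg (hd l), norm_mul]
  exact div_le_self (hd l) (one_le_mul_of_one_le_of_one_le
    (one_le_norm_one_add (re_ofReal_mul_nonneg (hd l) hu))
    (one_le_norm_one_add (re_ofReal_mul_nonneg (hd l) hv)))

theorem re_tsum_ite_div_nonpos_of_mem_oneNegInvCone [DecidableEq ι] (hd : ∀ l, 0 ≤ d l)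
    (hsum : Summable d) {z u v : ℂ} (hz : z.re ≤ 0) (hu : u ∈ oneNegInvCone z)
    (hv : v ∈ oneNegInvCone z) (k : ι) :
    ((∑' l, if l = k then 0 else
      (d l : ℂ) / ((1 + (d l : ℂ) * u) * (1 + (d l : ℂ) * v))) / z).re ≤ 0 := by
  have hsum_ite := (summable_div_one_add_mul_mul_one_add_mul hd hsum
    (re_nonneg_of_mem_oneNegInvCone hz hu) (re_nonneg_of_mem_oneNegInvCone hz hv)).ite_eq_zero k
  rw [← tsum_div_const, re_tsum (hsum_ite.div_const z)]
  refine tsum_nonpos fun l => ?_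
  split_ifs
  · simp
  · exact re_ofReal_div_mul_div_nonpos_of_mem_oneNegInvCone hz
      (one_add_mul_mem_oneNegInvCone (hd l) hu) (one_add_mul_mem_oneNegInvCone (hd l) hv) (hd l)

end Weights

/-- the fixed points `m̃` and `m̃_{(k)}` (with the `k`-th term removed)
of the self-consistent equation satisfy `|m̃_{(k)} − m̃| ≤ 1/(|z|·N)`. -/
theorem fixed_point_remove_one_term (z : ℂ) (hz : z.re < 0) (N : ℕ) (hN : 0 < N)
    (d : ℕ → ℝ) (hd : ∀ l, 0 ≤ d l) (hsum : Summable d) (k : ℕ) (m mk : ℂ)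
    (hm_cone : ∃ s t : ℝ, 0 ≤ s ∧ 0 ≤ t ∧ m = (s : ℂ) - (t : ℂ) / z)
    (hmk_cone : ∃ s t : ℝ, 0 ≤ s ∧ 0 ≤ t ∧ mk = (s : ℂ) - (t : ℂ) / z)
    (hm : m = -(1 / z) * (1 - (1 / (N : ℂ)) *
      ∑' l, (d l : ℂ) * m / (1 + (d l : ℂ) * m)))
    (hmk : mk = -(1 / z) * (1 - (1 / (N : ℂ)) *
      ∑' l, if l = k then 0 else (d l : ℂ) * mk / (1 + (d l : ℂ) * mk))) :
    ‖mk - m‖ ≤ 1 / (‖z‖ * N) := by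
  have hz0 : z ≠ 0 := by rintro rfl; simp at hz
  have hm_re := re_nonneg_of_mem_oneNegInvCone hz.le hm_cone
  have hmk_re := re_nonneg_of_mem_oneNegInvCone hz.le hmk_cone
  set W := ∑' l, if l = k then 0 else
    (d l : ℂ) / ((1 + (d l : ℂ) * mk) * (1 + (d l : ℂ) * m))
  have hdiff := tsum_ite_eq_zero_sub_tsum (summable_mul_div_one_add_mul hd hsum hm_re)
    (summable_mul_div_one_add_mul hd hsum hmk_re)
    (summable_div_one_add_mul_mul_one_add_mul hd hsum hmk_re hm_re) k (mk - m)
    fun l _ => mul_div_one_add_mul_sub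
      (one_add_ne_zero_of_re_nonneg (re_ofReal_mul_nonneg (hd l) hm_re))
      (one_add_ne_zero_of_re_nonneg (re_ofReal_mul_nonneg (hd l) hmk_re))
  set S := ∑' l, (d l : ℂ) * m / (1 + (d l : ℂ) * m)
  set S' := ∑' l, if l = k then 0 else (d l : ℂ) * mk / (1 + (d l : ℂ) * mk)
  have hzdiff : z * (mk - m) = (S' - S) / N := by
    rw [hm, hmk]
    field_simp
    ring
  have key : (mk - m) * (z - W / N) = -((d k : ℂ) * m / (1 + (d k : ℂ) * m)) / N := by
    linear_combination hzdiff + hdiff / N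
  have hW : ‖z‖ ≤ ‖z - W / N‖ := by
    refine norm_le_norm_sub_of_re_div_nonpos ?_
    rw [div_right_comm, div_natCast_re]
    exact div_nonpos_of_nonpos_of_nonneg
      (re_tsum_ite_div_nonpos_of_mem_oneNegInvCone hd hsum hz.le hmk_cone hm_cone k)
      N.cast_nonneg
  rw [le_div_iff₀ (by positivity)]
  calc ‖mk - m‖ * (‖z‖ * N) ≤ ‖(mk - m) * (z - W / N)‖ * N := by
        rw [norm_mul, ← mul_assoc]
        gcongr
    _ = ‖(d k : ℂ) * m / (1 + (d k : ℂ) * m)‖ := by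
        rw [key, norm_div, norm_neg, norm_natCast]
        field_simp
    _ ≤ 1 := norm_div_one_add_le_one (re_ofReal_mul_nonneg (hd k) hm_re)
end
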